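/- Let p be an odd prime number and let G be a group of order p^5 generated by f1, f2, f3, f4, f5 with Z(G) = ⟨f5⟩ and relations [f1,f2] = [f3,f4] = f5, [f1,f3] = [f2,f3] = [f1,f4] = [f2,f4] = 1, f5^p = 1, together with either (a) f1^p = f5 and f2^p = f3^p = f4^p = 1 (the group Φ_5(2111)), or (b) f1^p = f2^p = f3^p = f4^p = 1 (the group Φ_5(1^5)). Then B_0(G) = 0. -/

import Mathlib

/-- The coefficient group `ℚ/ℤ`. -/
abbrev QZ : Type := ℚ ⧸ AddSubgroup.zmultiples (1 : ℚ)

/-- A (inhomogeneous) 2-cocycle on `G` with values in `ℚ/ℤ` (trivial action). -/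
def IsGrpCocycle {G : Type*} [Group G] (f : G → G → QZ) : Prop :=
  ∀ g h k : G, f g h + f (g * h) k = f h k + f g (h * k)

/-- A 2-coboundary on `G` with values in `ℚ/ℤ` (trivial action). -/
def IsGrpCoboundary {G : Type*} [Group G] (f : G → G → QZ) : Prop :=
  ∃ c : G → QZ, ∀ g h : G, f g h = c g + c h - c (g * h)

/-- The additive group of 2-cocycles. -/
def cocycles2 (G : Type*) [Group G] : AddSubgroup (G → G → QZ) where
  carrier := {f | IsGrpCocycle f}
  zero_mem' := by intro g h k; simp
  add_mem' := by
    intro a b ha hb g h k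
    simp only [Pi.add_apply]
    rw [add_add_add_comm, ha g h k, hb g h k, add_add_add_comm]
  neg_mem' := by
    intro a ha g h k
    simp only [Pi.neg_apply, ← neg_add]
    rw [ha g h k]

/-- The subgroup of 2-coboundaries inside the group of 2-cocycles. -/
def coboundaries2 (G : Type*) [Group G] : AddSubgroup (cocycles2 G) where
  carrier := {f | IsGrpCoboundary (f : G → G → QZ)}
  zero_mem' := ⟨0, by intro g h; simp⟩
  add_mem' := by
    rintro a b ⟨c, hc⟩ ⟨d, hd⟩
    refine ⟨c + d, fun g h => ?_⟩
    have : ((a + b : cocycles2 G) : G → G → QZ) g h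
        = (a : G → G → QZ) g h + (b : G → G → QZ) g h := rfl
    rw [this, hc g h, hd g h]
    simp only [Pi.add_apply]
    abel
  neg_mem' := by
    rintro a ⟨c, hc⟩
    refine ⟨-c, fun g h => ?_⟩
    have : ((-a : cocycles2 G) : G → G → QZ) g h = -((a : G → G → QZ) g h) := rfl
    rw [this, hc g h]
    simp only [Pi.neg_apply]
    abel

/-- The second cohomology group `H²(G, ℚ/ℤ)` (trivial action), as cocycles mod coboundaries. -/
abbrev H2 (G : Type*) [Group G] : Type _ := cocycles2 G ⧸ coboundaries2 G

/-- A group is bicyclic if it is cyclic or the direct product of two cyclic groups. -/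
def IsBicyclic (A : Type*) [Group A] : Prop :=
  IsCyclic A ∨ ∃ B C : Subgroup A, IsCyclic B ∧ IsCyclic C ∧ Nonempty (A ≃* B × C)

/-- The restriction of `f` to every bicyclic subgroup is a coboundary. -/
def RestrictsToCoboundaries {G : Type*} [Group G] (f : G → G → QZ) : Prop :=
  ∀ A : Subgroup G, IsBicyclic A → IsGrpCoboundary (fun a b : A => f a b)

/-- The Bogomolov multiplier `B₀(G)`: the subgroup of `H²(G, ℚ/ℤ)` consisting of the classes
whose restriction to every bicyclic subgroup of `G` vanishes. -/
def B0 (G : Type*) [Group G] : AddSubgroup (H2 G) where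
  carrier := {x | ∃ f : cocycles2 G,
    (QuotientAddGroup.mk f : H2 G) = x ∧ RestrictsToCoboundaries (f : G → G → QZ)}
  zero_mem' := by
    refine ⟨0, rfl, fun A _ => ⟨0, fun a b => ?_⟩⟩
    simp
  add_mem' := by
    rintro x y ⟨f, rfl, hf⟩ ⟨g, rfl, hg⟩
    refine ⟨f + g, rfl, fun A hA => ?_⟩
    obtain ⟨c, hc⟩ := hf A hA
    obtain ⟨d, hd⟩ := hg A hA
    refine ⟨c + d, fun a b => ?_⟩
    have hc' : (f : G → G → QZ) (a : G) (b : G) = c a + c b - c (a * b) := hc a b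
    have hd' : (g : G → G → QZ) (a : G) (b : G) = d a + d b - d (a * b) := hd a b
    show ((f + g : cocycles2 G) : G → G → QZ) (a : G) (b : G)
        = (c + d) a + (c + d) b - (c + d) (a * b)
    have : ((f + g : cocycles2 G) : G → G → QZ) (a : G) (b : G)
        = (f : G → G → QZ) (a : G) (b : G) + (g : G → G → QZ) (a : G) (b : G) := rfl
    rw [this, hc', hd']
    simp only [Pi.add_apply]
    abel
  neg_mem' := by
    rintro x ⟨f, rfl, hf⟩
    refine ⟨-f, rfl, fun A hA => ?_⟩
    obtain ⟨c, hc⟩ := hf A hA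
    refine ⟨-c, fun a b => ?_⟩
    have hc' : (f : G → G → QZ) (a : G) (b : G) = c a + c b - c (a * b) := hc a b
    show ((-f : cocycles2 G) : G → G → QZ) (a : G) (b : G)
        = (-c) a + (-c) b - (-c) (a * b)
    have : ((-f : cocycles2 G) : G → G → QZ) (a : G) (b : G)
        = -((f : G → G → QZ) (a : G) (b : G)) := rfl
    rw [this, hc']
    simp only [Pi.neg_apply]
    abel

/-- The commutator `[g,h] = g⁻¹h⁻¹gh`. -/
def cmt {G : Type*} [Group G] (g h : G) : G := g⁻¹ * h⁻¹ * g * h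

/-!
A class of `B₀(G)` is represented by a cocycle `f` that is a coboundary on every bicyclic
subgroup. In a `p`-group two commuting elements generate a bicyclic subgroup, so `f` is symmetric
on commuting pairs; equivalently, in the central extension `E` of `G` by `ℚ/ℤ` defined by `f`,
elements lying over commuting elements commute. Hence the relations of `G` lift to `E`: the lifts
of `f2 f4⁻¹` and `f1 f3` commute, which forces `[b₁, b₂] = [b₃, b₄] =: c` for lifts `bᵢ` of
`fᵢ`, and since `ℚ/ℤ` is divisible the lifts can be chosen with `bᵢ ^ p ∈ ⟨c⟩`. Modulo the
central subgroup `⟨c⟩` of order at most `p`, the subgroup `⟨b₁, …, b₄⟩` becomes abelian of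
exponent `p` on four generators, so it has at most `p⁵ = |G|` elements while mapping onto `G`.
It is therefore the image of a section of `E → G`, and `f` is a coboundary.
-/

open Subgroup
open scoped commutatorElement

section

variable {M : Type*} [Group M]

lemma cmt_eq_commutatorElement (x y : M) : cmt x y = ⁅x⁻¹, y⁻¹⁆ := by
  simp [cmt, commutatorElement_def]

lemma cmt_eq_one_iff_commute {x y : M} : cmt x y = 1 ↔ Commute x y := by
  rw [cmt_eq_commutatorElement, commutatorElement_eq_one_iff_commute, Commute.inv_inv_iff]

lemma map_cmt {M' : Type*} [Group M'] (φ : M →* M') (x y : M) :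
    φ (cmt x y) = cmt (φ x) (φ y) := by
  simp [cmt_eq_commutatorElement, map_commutatorElement]

lemma cmt_mem {H : Subgroup M} {x y : M} (hx : x ∈ H) (hy : y ∈ H) : cmt x y ∈ H :=
  mul_mem (mul_mem (mul_mem (inv_mem hx) (inv_mem hy)) hx) hy

lemma cmt_self (x : M) : cmt x x = 1 := cmt_eq_one_iff_commute.mpr (.refl x)

lemma cmt_inv (x y : M) : (cmt x y)⁻¹ = cmt y x := by
  simp only [cmt]; group

lemma mul_eq_mul_cmt (x y : M) : x * y = y * x * cmt x y := by
  simp [cmt, mul_assoc]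

lemma cmt_eq_of_mul_eq {x y z : M} (h : x * y = y * x * z) : cmt x y = z :=
  (mul_left_cancel ((mul_eq_mul_cmt x y).symm.trans h))

lemma cmt_mul_left (a b y : M) : cmt (a * b) y = b⁻¹ * cmt a y * b * cmt b y := by
  simp only [cmt]; group

lemma cmt_mul_right (x a b : M) : cmt x (a * b) = cmt x b * (b⁻¹ * cmt x a * b) := by
  simp only [cmt]; group

lemma cmt_mul_left_of_mem_center {x y z : M} (hz : z ∈ center M) : cmt (x * z) y = cmt x y := by
  rw [cmt_mul_left, cmt_eq_one_iff_commute.mpr (mem_center_iff.mp hz y).symm, mul_one, mul_assoc,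
    mem_center_iff.mp hz, inv_mul_cancel_left]

lemma cmt_pow_right {x y : M} (h : cmt x y ∈ center M) (n : ℕ) :
    cmt x (y ^ n) = cmt x y ^ n := by
  induction n with
  | zero => simp [cmt]
  | succ n ih =>
    rw [pow_succ, cmt_mul_right, ih, mul_assoc, ← mem_center_iff.mp (pow_mem h n) y,
      inv_mul_cancel_left, pow_succ']

lemma cmt_mul_inv_mul {a b c d : M} (had : Commute a d) (hbc : Commute b c)
    (hab : cmt a b ∈ center M) (hcd : cmt c d ∈ center M) :
    cmt (b * d⁻¹) (a * c) = cmt c d * (cmt a b)⁻¹ := by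
  apply cmt_eq_of_mul_eq
  have hba : b * a = a * b * (cmt a b)⁻¹ := by rw [mul_eq_mul_cmt a b]; group
  have hdc : d⁻¹ * c = c * d⁻¹ * cmt c d := by
    calc d⁻¹ * c = d⁻¹ * (c * d) * d⁻¹ := by group
      _ = d⁻¹ * (d * c * cmt c d) * d⁻¹ := by rw [← mul_eq_mul_cmt]
      _ = c * (cmt c d * d⁻¹) := by group
      _ = c * d⁻¹ * cmt c d := by rw [← mem_center_iff.mp hcd]; group
  calc b * d⁻¹ * (a * c) = b * (d⁻¹ * a) * c := by group
    _ = b * (a * d⁻¹) * c := by rw [had.inv_right.eq]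
    _ = a * b * (cmt a b)⁻¹ * (d⁻¹ * c) := by rw [← hba]; group
    _ = a * b * (d⁻¹ * c) * (cmt a b)⁻¹ := by
      rw [mul_assoc _ (cmt a b)⁻¹, ← mem_center_iff.mp (inv_mem hab)]; group
    _ = a * (b * c) * d⁻¹ * (cmt c d * (cmt a b)⁻¹) := by rw [hdc]; group
    _ = a * c * (b * d⁻¹) * (cmt c d * (cmt a b)⁻¹) := by rw [hbc.eq]; group

lemma card_closure_range_le_of_pairwise_commute {ι : Type*} [Fintype ι]
    {g : ι → M} (hcomm : Pairwise fun i j => Commute (g i) (g j)) {n : ℕ} (hn : 0 < n)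
    (hg : ∀ i, g i ^ n = 1) :
    Finite (closure (Set.range g)) ∧ Nat.card (closure (Set.range g)) ≤ n ^ Fintype.card ι := by
  have hc : Pairwise fun i j => ∀ x y, x ∈ zpowers (g i) → y ∈ zpowers (g j) → Commute x y := by
    rintro i j hij _ _ ⟨a, rfl⟩ ⟨b, rfl⟩
    exact (hcomm hij).zpow_zpow a b
  have : ∀ i, Finite (zpowers (g i)) := fun i =>
    (isOfFinOrder_iff_pow_eq_one.mpr ⟨n, hn, hg i⟩).finite_zpowers.to_subtype
  set φ := noncommPiCoprod hc
  have hrange : φ.range = closure (Set.range g) := by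
    rw [noncommPiCoprod_range, ← Set.iUnion_singleton_eq_range, Subgroup.closure_iUnion]
    simp_rw [zpowers_eq_closure]
  rw [← hrange]
  refine ⟨Finite.of_surjective _ φ.rangeRestrict_surjective,
    (Nat.card_le_card_of_surjective _ φ.rangeRestrict_surjective).trans ?_⟩
  rw [Nat.card_pi, ← Finset.card_univ]
  exact Finset.prod_le_pow_card _ _ _ fun i _ => by
    rw [Nat.card_zpowers]; exact orderOf_le_of_pow_eq_one hn (hg i)

lemma card_closure_range_le_of_cmt_mem {N : Subgroup M} [N.Normal]
    [Finite N] {ι : Type*} [Fintype ι] {b : ι → M} (hcomm : ∀ i j, cmt (b i) (b j) ∈ N)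
    {n : ℕ} (hn : 0 < n) (hpow : ∀ i, b i ^ n ∈ N) :
    Finite (closure (Set.range b)) ∧
      Nat.card (closure (Set.range b)) ≤ n ^ Fintype.card ι * Nat.card N := by
  set π := QuotientGroup.mk' N
  set S := closure (Set.range b)
  obtain ⟨hfin, hcard⟩ := card_closure_range_le_of_pairwise_commute (g := π ∘ b)
    (fun i j _ => cmt_eq_one_iff_commute.mp <| by
      rw [Function.comp_apply, Function.comp_apply, ← map_cmt, QuotientGroup.mk'_apply,
        QuotientGroup.eq_one_iff]
      exact hcomm i j)
    hn (fun i => by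
      rw [Function.comp_apply, ← map_pow, QuotientGroup.mk'_apply, QuotientGroup.eq_one_iff]
      exact hpow i)
  rw [Set.range_comp, ← MonoidHom.map_closure] at hfin hcard
  have hinj : Function.Injective fun x : N.subgroupOf S => (⟨x.1.1, x.2⟩ : N) :=
    fun x y h => by ext; simpa using congrArg Subtype.val h
  have : Finite (N.subgroupOf S) := Finite.of_injective _ hinj
  have hS : Nat.card S = Nat.card (N.subgroupOf S) * Nat.card (S.map π) := by
    rw [← relIndex_ker, QuotientGroup.ker_mk', relIndex, card_mul_index]
  have : Finite S := Nat.finite_of_card_ne_zero <| by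
    rw [hS]; exact mul_ne_zero Nat.card_pos.ne' Nat.card_pos.ne'
  refine ⟨this, ?_⟩
  rw [hS, mul_comm]
  exact Nat.mul_le_mul hcard (Nat.card_le_card_of_injective _ hinj)

lemma card_closure_le_of_cmt_eq {p : ℕ} (hp : 0 < p) {b₁ b₂ b₃ b₄ c : M} (hc : c ∈ center M)
    (h₁₂ : cmt b₁ b₂ = c) (h₃₄ : cmt b₃ b₄ = c) (h₁₃ : Commute b₁ b₃) (h₁₄ : Commute b₁ b₄)
    (h₂₃ : Commute b₂ b₃) (h₂₄ : Commute b₂ b₄)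
    (hpow : ∀ b ∈ ({b₁, b₂, b₃, b₄} : Set M), b ^ p ∈ zpowers c) :
    Finite (closure {b₁, b₂, b₃, b₄}) ∧ Nat.card (closure {b₁, b₂, b₃, b₄}) ≤ p ^ 5 := by
  have hcen : zpowers c ≤ center M := zpowers_le.mpr hc
  have : (zpowers c).Normal :=
    ⟨fun n hn g => by rwa [mem_center_iff.mp (hcen hn) g, mul_inv_cancel_right]⟩
  -- `b₂ ^ p` is central, so `c ^ p = cmt b₁ (b₂ ^ p) = 1`
  have hcp : c ^ p = 1 := by
    rw [← h₁₂, ← cmt_pow_right (h₁₂ ▸ hc), cmt_eq_one_iff_commute]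
    exact (mem_center_iff.mp (hcen (hpow b₂ (by simp))) b₁)
  have : Finite (zpowers c) :=
    (isOfFinOrder_iff_pow_eq_one.mpr ⟨p, hp, hcp⟩).finite_zpowers.to_subtype
  have h₂₁ : cmt b₂ b₁ = c⁻¹ := by rw [← h₁₂, cmt_inv]
  have h₄₃ : cmt b₄ b₃ = c⁻¹ := by rw [← h₃₄, cmt_inv]
  have hone {x y : M} (h : Commute x y) : cmt x y = 1 ∧ cmt y x = 1 :=
    ⟨cmt_eq_one_iff_commute.mpr h, cmt_eq_one_iff_commute.mpr h.symm⟩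
  have hrange : Set.range ![b₁, b₂, b₃, b₄] = {b₁, b₂, b₃, b₄} := by
    simp only [Matrix.range_cons, Matrix.range_empty, Set.union_empty, Set.singleton_union]
  obtain ⟨hfin, hcard⟩ := card_closure_range_le_of_cmt_mem (N := zpowers c) (b := ![b₁, b₂, b₃, b₄])
    (fun i j => by
      fin_cases i <;> fin_cases j <;>
        simp [cmt_self, h₁₂, h₂₁, h₃₄, h₄₃, (hone h₁₃).1, (hone h₁₃).2, (hone h₁₄).1,
          (hone h₁₄).2, (hone h₂₃).1, (hone h₂₃).2, (hone h₂₄).1, (hone h₂₄).2])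
    hp (fun i => hpow _ (by rw [← hrange]; exact Set.mem_range_self i))
  rw [hrange] at hfin hcard
  rw [Fintype.card_fin, Nat.card_zpowers] at hcard
  exact ⟨hfin, hcard.trans (by
    rw [pow_succ]; exact Nat.mul_le_mul_left _ (orderOf_le_of_pow_eq_one hp hcp))⟩

end

lemma isBicyclic_of_closure_pair_eq_top {H : Type*} [CommGroup H] [Finite H] {x y : H}
    (hgen : closure {x, y} = ⊤) (hdvd : orderOf y ∣ orderOf x) : IsBicyclic H := by
  set q := orderOf (y : H ⧸ zpowers x)
  obtain ⟨r, hr⟩ : q ∣ orderOf y := orderOf_map_dvd (QuotientGroup.mk' _) y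
  obtain ⟨m, hm⟩ : ∃ m : ℤ, x ^ m = y ^ q := by
    rw [← mem_zpowers_iff, ← QuotientGroup.eq_one_iff, QuotientGroup.mk_pow]
    exact pow_orderOf_eq_one _
  -- `x ^ (m * r) = y ^ (q * r) = 1`, so `q * r = orderOf y ∣ orderOf x ∣ m * r`
  obtain ⟨k, rfl⟩ : (q : ℤ) ∣ m := by
    have hxmr : x ^ (m * r) = 1 := by
      rw [zpow_mul, hm, zpow_natCast, ← pow_mul, ← hr, pow_orderOf_eq_one]
    have hr0 : (r : ℤ) ≠ 0 := by exact_mod_cast right_ne_zero_of_mul (hr ▸ (orderOf_pos y).ne')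
    refine (mul_dvd_mul_iff_right hr0).mp (dvd_trans ?_ (orderOf_dvd_iff_zpow_eq_one.mpr hxmr))
    exact_mod_cast hr ▸ hdvd
  set y₂ := y * (x ^ k)⁻¹
  have hy₂ : y₂ ^ q = 1 := by
    rw [mul_pow, inv_pow, ← zpow_natCast (x ^ k), ← zpow_mul, mul_comm k, hm, mul_inv_cancel]
  set φ := (zpowers x).subtype.coprod (zpowers y₂).subtype
  have hsurj : Function.Surjective φ := by
    rw [← MonoidHom.range_eq_top, eq_top_iff, ← hgen, closure_le]
    rintro z (rfl | rfl)
    · exact ⟨(⟨z, mem_zpowers z⟩, 1), by simp [φ]⟩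
    · exact ⟨(⟨x ^ k, zpow_mem (mem_zpowers x) k⟩, ⟨y₂, mem_zpowers y₂⟩), by simp [φ, y₂]⟩
  have hcard : Nat.card (zpowers x × zpowers y₂) ≤ Nat.card H := by
    rw [Nat.card_prod, Nat.card_zpowers, Nat.card_zpowers,
      card_eq_card_quotient_mul_card_subgroup (zpowers x), Nat.card_zpowers, mul_comm]
    exact Nat.mul_le_mul_right _
      ((orderOf_le_of_pow_eq_one (orderOf_pos _) hy₂).trans orderOf_le_card)
  have hbij : Function.Bijective φ := (Nat.bijective_iff_surjective_and_card φ).mpr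
    ⟨hsurj, le_antisymm hcard (Nat.card_le_card_of_surjective φ hsurj)⟩
  exact Or.inr ⟨_, _, inferInstance, inferInstance, ⟨(MulEquiv.ofBijective φ hbij).symm⟩⟩

open scoped IsMulCommutative in
lemma IsPGroup.isBicyclic_closure_pair {p : ℕ} [Fact p.Prime] {G : Type*} [Group G] [Finite G]
    (hG : IsPGroup p G) {x y : G} (hxy : Commute x y) : IsBicyclic (closure {x, y}) := by
  have : IsMulCommutative (closure {x, y}) := isMulCommutative_closure <| by
    rintro a (rfl | rfl) b (rfl | rfl) <;> first | rfl | exact hxy.eq | exact hxy.eq.symm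
  set x' : closure {x, y} := ⟨x, subset_closure (by simp)⟩
  set y' : closure {x, y} := ⟨y, subset_closure (by simp)⟩
  have hgen : closure {x', y'} = ⊤ := by
    convert closure_closure_coe_preimage (k := {x, y})
    ext ⟨a, ha⟩
    simp [x', y']
  obtain ⟨i, hi⟩ := IsPGroup.iff_orderOf.mp (hG.to_subgroup _) x'
  obtain ⟨j, hj⟩ := IsPGroup.iff_orderOf.mp (hG.to_subgroup _) y'
  rcases le_total j i with h | h
  · exact isBicyclic_of_closure_pair_eq_top hgen (hi ▸ hj ▸ pow_dvd_pow p h)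
  · rw [Set.pair_comm x' y'] at hgen
    exact isBicyclic_of_closure_pair_eq_top hgen (hi ▸ hj ▸ pow_dvd_pow p h)

lemma RestrictsToCoboundaries.apply_comm {p : ℕ} [Fact p.Prime] {G : Type*} [Group G] [Finite G]
    (hG : IsPGroup p G) {f : G → G → QZ} (hf : RestrictsToCoboundaries f) {x y : G}
    (hxy : Commute x y) : f x y = f y x := by
  obtain ⟨c, hc⟩ := hf _ (hG.isBicyclic_closure_pair hxy)
  have hx : x ∈ closure {x, y} := subset_closure (by simp)
  have hy : y ∈ closure {x, y} := subset_closure (by simp)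
  have hxy' : (⟨x, hx⟩ * ⟨y, hy⟩ : closure {x, y}) = ⟨y, hy⟩ * ⟨x, hx⟩ := Subtype.ext hxy.eq
  have h₁ := hc ⟨x, hx⟩ ⟨y, hy⟩
  have h₂ := hc ⟨y, hy⟩ ⟨x, hx⟩
  simp only at h₁ h₂
  rw [h₁, h₂, hxy', add_comm (c _)]

lemma B0_eq_bot_of_isPGroup {p : ℕ} [Fact p.Prime] {G : Type*} [Group G] [Finite G]
    (hG : IsPGroup p G)
    (hcob : ∀ f : cocycles2 G, (∀ g h : G, Commute g h → f.1 g h = f.1 h g) →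
      IsGrpCoboundary f.1) :
    B0 G = ⊥ := by
  refine eq_bot_iff.mpr ?_
  rintro _ ⟨f, rfl, hf⟩
  rw [AddSubgroup.mem_bot, QuotientAddGroup.eq_zero_iff]
  exact hcob f fun _ _ => hf.apply_comm hG

lemma QZ.exists_nsmul_eq (v : QZ) {n : ℕ} (hn : n ≠ 0) : ∃ u : QZ, n • u = v :=
  letI := AddGroup.divisibleByNatOfDivisibleByInt ℚ
  ⟨DivisibleBy.div v n, DivisibleBy.div_cancel v hn⟩

lemma IsGrpCocycle.apply_one_left {G : Type*} [Group G] {f : G → G → QZ} (hf : IsGrpCocycle f)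
    (g : G) : f 1 g = f 1 1 := by
  simpa using (hf 1 1 g).symm

lemma IsGrpCocycle.apply_one_right {G : Type*} [Group G] {f : G → G → QZ} (hf : IsGrpCocycle f)
    (g : G) : f g 1 = f 1 1 := by
  simpa using hf g 1 1

/-- The central extension of `G` by `ℚ/ℤ` classified by `f`:
`(g, u) * (h, v) = (g * h, u + v + f g h)`, with identity `(1, -f 1 1)` as `f` need not be
normalized. -/
@[ext]
structure CentralExtension {G : Type*} [Group G] (f : cocycles2 G) where
  base : G
  fiber : QZ

namespace CentralExtension

variable {G : Type*} [Group G] {f : cocycles2 G}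

instance : Group (CentralExtension f) where
  mul x y := ⟨x.base * y.base, x.fiber + y.fiber + f.1 x.base y.base⟩
  one := ⟨1, -f.1 1 1⟩
  inv x := ⟨x.base⁻¹, -x.fiber - f.1 x.base⁻¹ x.base - f.1 1 1⟩
  mul_assoc x y z := by
    refine CentralExtension.ext (mul_assoc _ _ _) ?_
    show x.fiber + y.fiber + f.1 x.base y.base + z.fiber + f.1 (x.base * y.base) z.base
      = x.fiber + (y.fiber + z.fiber + f.1 y.base z.base) + f.1 x.base (y.base * z.base)
    have := f.2 x.base y.base z.base
    calc _ = x.fiber + y.fiber + z.fiber + (f.1 x.base y.base + f.1 (x.base * y.base) z.base) := by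
          abel
      _ = _ := by rw [this]; abel
  one_mul x := by
    refine CentralExtension.ext (one_mul _) ?_
    show -f.1 1 1 + x.fiber + f.1 1 x.base = x.fiber
    rw [IsGrpCocycle.apply_one_left f.2 x.base]; abel
  mul_one x := by
    refine CentralExtension.ext (mul_one _) ?_
    show x.fiber + -f.1 1 1 + f.1 x.base 1 = x.fiber
    rw [IsGrpCocycle.apply_one_right f.2 x.base]; abel
  inv_mul_cancel x := by
    refine CentralExtension.ext (inv_mul_cancel _) ?_
    show -x.fiber - f.1 x.base⁻¹ x.base - f.1 1 1 + x.fiber + f.1 x.base⁻¹ x.base = -f.1 1 1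
    abel

def proj : CentralExtension f →* G where
  toFun := base
  map_one' := rfl
  map_mul' _ _ := rfl

@[simp]
lemma proj_apply (x : CentralExtension f) : proj x = x.base := rfl

def incl : Multiplicative QZ →* CentralExtension f where
  toFun u := ⟨1, u.toAdd - f.1 1 1⟩
  map_one' := CentralExtension.ext rfl (zero_sub _)
  map_mul' u v := CentralExtension.ext (mul_one 1).symm <| by
    show (u.toAdd + v.toAdd) - f.1 1 1 = u.toAdd - f.1 1 1 + (v.toAdd - f.1 1 1) + f.1 1 1
    abel

lemma mem_center_of_base_eq_one {x : CentralExtension f} (h : x.base = 1) :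
    x ∈ center (CentralExtension f) :=
  mem_center_iff.mpr fun y => CentralExtension.ext
    (show y.base * x.base = x.base * y.base by rw [h, mul_one, one_mul]) <| by
    show y.fiber + x.fiber + f.1 y.base x.base = x.fiber + y.fiber + f.1 x.base y.base
    rw [h, IsGrpCocycle.apply_one_left f.2, IsGrpCocycle.apply_one_right f.2, add_comm y.fiber]

lemma exists_lift_pow_eq {g : G} {y : CentralExtension f} {n : ℕ} (hn : n ≠ 0)
    (h : g ^ n = y.base) : ∃ x : CentralExtension f, x.base = g ∧ x ^ n = y := by
  set x₀ : CentralExtension f := ⟨g, 0⟩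
  set k := (x₀ ^ n)⁻¹ * y
  have hk : k = incl (.ofAdd (k.fiber + f.1 1 1)) := CentralExtension.ext
    (inv_mul_eq_one.mpr ((map_pow proj x₀ n).trans h)) (add_sub_cancel_right _ _).symm
  obtain ⟨u, hu⟩ := QZ.exists_nsmul_eq (k.fiber + f.1 1 1) hn
  have hcomm : Commute x₀ (incl (.ofAdd u)) :=
    mem_center_iff.mp (mem_center_of_base_eq_one rfl) x₀
  refine ⟨x₀ * incl (.ofAdd u), mul_one g, ?_⟩
  rw [hcomm.mul_pow, ← map_pow, ← ofAdd_nsmul, hu, ← hk, mul_inv_cancel_left]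

lemma cmt_eq_of_base_eq {x x' : CentralExtension f} (h : x.base = x'.base)
    (y : CentralExtension f) : cmt x y = cmt x' y := by
  rw [← mul_inv_cancel_left x' x, cmt_mul_left_of_mem_center]
  exact mem_center_of_base_eq_one (inv_mul_eq_one.mpr h.symm)

lemma commute_of_commute_base (hsym : ∀ g h : G, Commute g h → f.1 g h = f.1 h g)
    {x y : CentralExtension f} (h : Commute x.base y.base) : Commute x y :=
  CentralExtension.ext h.eq <| by
    show x.fiber + y.fiber + f.1 x.base y.base = y.fiber + x.fiber + f.1 y.base x.base
    rw [hsym _ _ h, add_comm x.fiber]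

lemma mem_center_of_base_mem_center (hsym : ∀ g h : G, Commute g h → f.1 g h = f.1 h g)
    {x : CentralExtension f} (h : x.base ∈ center G) :
    x ∈ center (CentralExtension f) :=
  mem_center_iff.mpr fun y => commute_of_commute_base hsym (mem_center_iff.mp h y.base)

lemma cmt_eq_cmt_of_base (hsym : ∀ g h : G, Commute g h → f.1 g h = f.1 h g)
    {x₁ x₂ x₃ x₄ : CentralExtension f} (h₁₄ : Commute x₁.base x₄.base)
    (h₂₃ : Commute x₂.base x₃.base) (hz : cmt x₁.base x₂.base ∈ center G)
    (h : cmt x₁.base x₂.base = cmt x₃.base x₄.base) : cmt x₁ x₂ = cmt x₃ x₄ := by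
  have hcen {x y : CentralExtension f} (hxy : cmt x.base y.base ∈ center G) :
      cmt x y ∈ center (CentralExtension f) :=
    mem_center_of_base_mem_center hsym (by rw [← proj_apply, map_cmt]; exact hxy)
  have hG := cmt_mul_inv_mul h₁₄ h₂₃ hz (h ▸ hz)
  rw [h, mul_inv_cancel, cmt_eq_one_iff_commute] at hG
  have hE := cmt_mul_inv_mul (commute_of_commute_base hsym h₁₄)
    (commute_of_commute_base hsym h₂₃) (hcen hz) (hcen (h ▸ hz))
  rw [cmt_eq_one_iff_commute.mpr (commute_of_commute_base hsym hG)] at hE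
  exact (mul_inv_eq_one.mp hE.symm).symm

lemma isGrpCoboundary_of_section (σ : G →* CentralExtension f) (hσ : ∀ g, (σ g).base = g) :
    IsGrpCoboundary f.1 := by
  refine ⟨fun g => -(σ g).fiber, fun g h => ?_⟩
  have : (σ (g * h)).fiber = (σ g).fiber + (σ h).fiber + f.1 g h := by
    rw [map_mul]
    show _ + _ + f.1 (σ g).base (σ h).base = _
    rw [hσ, hσ]
  simp only [this]
  abel

lemma isGrpCoboundary_of_map_proj_eq_top {S : Subgroup (CentralExtension f)} [Finite S]
    (hS : S.map proj = ⊤) (hcard : Nat.card S ≤ Nat.card G) : IsGrpCoboundary f.1 := by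
  set φ := proj.comp S.subtype
  have hsurj : Function.Surjective φ := by
    rwa [← MonoidHom.range_eq_top, MonoidHom.range_comp, range_subtype]
  have hbij : Function.Bijective φ := (Nat.bijective_iff_surjective_and_card φ).mpr
    ⟨hsurj, le_antisymm (Nat.card_le_card_of_surjective φ hsurj) hcard |>.symm⟩
  set e := MulEquiv.ofBijective φ hbij
  exact isGrpCoboundary_of_section (S.subtype.comp e.symm.toMonoidHom) e.apply_symm_apply

end CentralExtension

open CentralExtension

theorem B0_phi5_eq_bot_general (p : ℕ) (hp : p.Prime)
    (G : Type) [Group G] [Finite G] (hcard : Nat.card G = p ^ 5)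
    (f1 f2 f3 f4 f5 : G)
    (hgen : Subgroup.closure {f1, f2, f3, f4, f5} = ⊤)
    (hcen : Subgroup.closure {f5} = Subgroup.center G)
    (r1 : cmt f1 f2 = f5) (r2 : cmt f3 f4 = f5)
    (r3 : cmt f1 f3 = 1) (r4 : cmt f2 f3 = 1) (r5 : cmt f1 f4 = 1) (r6 : cmt f2 f4 = 1)
    (hext : (f1 ^ p = f5 ∧ f2 ^ p = 1 ∧ f3 ^ p = 1 ∧ f4 ^ p = 1) ∨
            (f1 ^ p = 1 ∧ f2 ^ p = 1 ∧ f3 ^ p = 1 ∧ f4 ^ p = 1)) :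
    B0 G = ⊥ := by
  have : Fact p.Prime := ⟨hp⟩
  refine B0_eq_bot_of_isPGroup (IsPGroup.of_card hcard) fun f hsym => ?_
  have h5 : f5 ∈ center G := hcen ▸ subset_closure rfl
  obtain ⟨hf2, hf3, hf4⟩ : f2 ^ p = 1 ∧ f3 ^ p = 1 ∧ f4 ^ p = 1 := by
    rcases hext with ⟨-, h⟩ | ⟨-, h⟩ <;> exact h
  obtain ⟨b₂, rfl, hb₂⟩ := exists_lift_pow_eq (f := f) (y := 1) hp.ne_zero hf2
  obtain ⟨b₃, rfl, hb₃⟩ := exists_lift_pow_eq (f := f) (y := 1) hp.ne_zero hf3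
  obtain ⟨b₄, rfl, hb₄⟩ := exists_lift_pow_eq (f := f) (y := 1) hp.ne_zero hf4
  set c := cmt (⟨f1, 0⟩ : CentralExtension f) b₂
  have hc : c.base = f5 := r1 ▸ map_cmt proj _ _
  obtain ⟨b₁, rfl, hb₁⟩ : ∃ b₁ : CentralExtension f, b₁.base = f1 ∧ b₁ ^ p ∈ zpowers c := by
    rcases hext with ⟨h1, -⟩ | ⟨h1, -⟩
    · obtain ⟨b, hb, hbp⟩ := exists_lift_pow_eq hp.ne_zero (h1.trans hc.symm)
      exact ⟨b, hb, hbp ▸ mem_zpowers c⟩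
    · obtain ⟨b, hb, hbp⟩ := exists_lift_pow_eq (y := 1) hp.ne_zero h1
      exact ⟨b, hb, hbp ▸ one_mem _⟩
  have h₁₂ : cmt b₁ b₂ = c := cmt_eq_of_base_eq (x' := ⟨b₁.base, 0⟩) (x := b₁) rfl b₂
  have h₃₄ : cmt b₃ b₄ = c := h₁₂ ▸ (cmt_eq_cmt_of_base hsym (cmt_eq_one_iff_commute.mp r5)
    (cmt_eq_one_iff_commute.mp r4) (r1 ▸ h5) (r1.trans r2.symm)).symm
  have hlift {x y : CentralExtension f} (h : cmt x.base y.base = 1) : Commute x y :=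
    commute_of_commute_base hsym (cmt_eq_one_iff_commute.mp h)
  obtain ⟨_, hS⟩ := card_closure_le_of_cmt_eq hp.pos
    (mem_center_of_base_mem_center hsym (hc ▸ h5)) h₁₂ h₃₄ (hlift r3) (hlift r5) (hlift r4)
    (hlift r6) (by rintro _ (rfl | rfl | rfl | rfl) <;> simp [hb₁, hb₂, hb₃, hb₄])
  refine isGrpCoboundary_of_map_proj_eq_top ?_ (hcard ▸ hS)
  rw [eq_top_iff, ← hgen, closure_le]
  rintro _ (rfl | rfl | rfl | rfl | rfl)
  any_goals exact ⟨_, subset_closure (by simp), rfl⟩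
  exact ⟨c, h₁₂ ▸ cmt_mem (subset_closure (by simp)) (subset_closure (by simp)), hc⟩

/-- Let `p` be an odd prime and `G` one of the groups `Φ₅(2111)` or `Φ₅(1⁵)` of order `p⁵`,
i.e. generated by `f1,…,f5` with `Z(G) = ⟨f5⟩`, relations `[f1,f2] = [f3,f4] = f5`,
`[f1,f3] = [f2,f3] = [f1,f4] = [f2,f4] = 1`, `f5^p = 1`, together with (a) `f1^p = f5`,
`f2^p = f3^p = f4^p = 1`, or (b) `f1^p = f2^p = f3^p = f4^p = 1`. Then `B₀(G) = 0`. -/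
theorem B0_phi5_eq_bot (p : ℕ) (hp : p.Prime) (hodd : Odd p)
    (G : Type) [Group G] [Finite G] (hcard : Nat.card G = p ^ 5)
    (f1 f2 f3 f4 f5 : G)
    (hgen : Subgroup.closure {f1, f2, f3, f4, f5} = ⊤)
    (hcen : Subgroup.closure {f5} = Subgroup.center G)
    (r1 : cmt f1 f2 = f5) (r2 : cmt f3 f4 = f5)
    (r3 : cmt f1 f3 = 1) (r4 : cmt f2 f3 = 1) (r5 : cmt f1 f4 = 1) (r6 : cmt f2 f4 = 1)
    (h5p : f5 ^ p = 1)
    (hext : (f1 ^ p = f5 ∧ f2 ^ p = 1 ∧ f3 ^ p = 1 ∧ f4 ^ p = 1) ∨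
            (f1 ^ p = 1 ∧ f2 ^ p = 1 ∧ f3 ^ p = 1 ∧ f4 ^ p = 1)) :
    B0 G = ⊥ :=
  B0_phi5_eq_bot_general p hp G hcard f1 f2 f3 f4 f5 hgen hcen r1 r2 r3 r4 r5 r6 hext
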